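/- For every v ∈ H¹(0,T) with v(0)=0, the identity (v, ∂_t L_T v)_{L²(0,T)} = (1/(2T)) ∫_0^T e^{-t/T} |v(t)|² dt + (1/(2e)) |v(T)|² holds. -/

import Mathlib

open Real Set

/-
The integrand `v · e^{-t/T} v'` is, up to a lower-order term, the derivative of the weighted energy
`e^{-t/T} v² / 2`: differentiating the weight produces `-(1/(2T)) e^{-t/T} v²`. The fundamental
theorem of calculus then gives the identity, the boundary term at `0` vanishing because `v 0 = 0`
and the one at `T` being `e^{-1} v(T)² / 2`.
-/

section WeightedEnergy

variable {a b : ℝ} {v v' w w' : ℝ → ℝ}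

theorem hasDerivAt_weighted_sq {t : ℝ} (hv : HasDerivAt v (v' t) t) (hw : HasDerivAt w (w' t) t) :
    HasDerivAt (fun s => w s * v s ^ 2 / 2) (v t * (w t * v' t) + w' t * v t ^ 2 / 2) t := by
  refine ((hw.fun_mul (hv.fun_pow 2)).div_const 2).congr_deriv ?_
  push_cast
  ring

theorem integral_mul_weight_mul_deriv
    (hv : ∀ t ∈ uIcc a b, HasDerivAt v (v' t) t) (hw : ∀ t ∈ uIcc a b, HasDerivAt w (w' t) t)
    (hv' : ContinuousOn v' (uIcc a b)) (hw' : ContinuousOn w' (uIcc a b)) :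
    ∫ t in a..b, v t * (w t * v' t)
      = (w b * v b ^ 2 - w a * v a ^ 2) / 2 - (∫ t in a..b, w' t * v t ^ 2) / 2 := by
  have hvc : ContinuousOn v (uIcc a b) := HasDerivAt.continuousOn hv
  have hwc : ContinuousOn w (uIcc a b) := HasDerivAt.continuousOn hw
  have hint₁ : IntervalIntegrable (fun t => v t * (w t * v' t)) MeasureTheory.volume a b :=
    (hvc.mul (hwc.mul hv')).intervalIntegrable
  have hint₂ : IntervalIntegrable (fun t => w' t * v t ^ 2 / 2) MeasureTheory.volume a b :=
    ((hw'.mul (hvc.pow 2)).div_const 2).intervalIntegrable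
  have hftc := intervalIntegral.integral_eq_sub_of_hasDerivAt
    (fun t ht => hasDerivAt_weighted_sq (hv t ht) (hw t ht)) (hint₁.add hint₂)
  rw [intervalIntegral.integral_add hint₁ hint₂, intervalIntegral.integral_div] at hftc
  linarith

end WeightedEnergy

theorem hasDerivAt_exp_neg_div (T t : ℝ) :
    HasDerivAt (fun s => exp (-(s / T))) (-(1 / T) * exp (-(t / T))) t := by
  have hlin : HasDerivAt (fun s : ℝ => -(s / T)) (-(1 / T)) t := by
    simpa using ((hasDerivAt_id t).div_const T).fun_neg
  simpa [mul_comm] using hlin.exp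

/-- For every `v ∈ H¹(0,T)` with `v(0)=0`:
`(v, ∂_t L_T v)_{L²(0,T)} = (1/(2T)) ∫_0^T e^{-t/T} |v|² dt + (1/(2e)) |v(T)|²`. -/
theorem stmt_3 (T : ℝ) (hT : 0 < T)
    (v v' : ℝ → ℝ)
    (hv : ∀ t ∈ Icc (0:ℝ) T, HasDerivAt v (v' t) t)
    (hv'c : ContinuousOn v' (Icc (0:ℝ) T))
    (hv0 : v 0 = 0) :
    (∫ t in (0:ℝ)..T, v t * (Real.exp (-(t/T)) * v' t))
      = 1 / (2 * T) * (∫ t in (0:ℝ)..T, Real.exp (-(t/T)) * (v t)^2) +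
        1 / (2 * Real.exp 1) * (v T)^2 := by
  rw [← uIcc_of_le hT.le] at hv hv'c
  have hweight : ContinuousOn (fun t => -(1 / T) * exp (-(t / T))) (uIcc 0 T) := by fun_prop
  rw [integral_mul_weight_mul_deriv hv (fun t _ => hasDerivAt_exp_neg_div T t) hv'c hweight]
  simp only [mul_assoc, intervalIntegral.integral_const_mul, div_self hT.ne', hv0, exp_neg]
  field_simp
  ring
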